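/- arXiv:1801.01950 — 2 statements merged into one kernel-verified Lean document; each statement's English description precedes it below -/
import Mathlib

section
/- Let W be a random vector in R^p whose distribution is invariant under every diagonal matrix g with diagonal entries in {1, -1} (i.e., gW has the same distribution as W), and suppose P(W = W_tilde) = 0 where W_tilde is an independent copy of W. Let Omega be an orthogonal p x p matrix, b a vector in R^p, and set V = Omega W + b. Then the multivariate Kendall's tau matrix of V satisfies M_V = Omega Lambda_1 Omega^T for some diagonal p x p matrix Lambda_1; in particular, every column of Omega is an eigenvector of M_V. If moreover E||W||_2^2 < infinity, then Cov(V) = Omega Lambda Omega^T with Lambda = diag(Var(W_1), ..., Var(W_p)), so M_V and Cov(V) are diagonalized by the same orthogonal matrix Omega. -/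
open Matrix MeasureTheory

open scoped Classical in
/-- The multivariate Kendall's tau kernel: for `x ≠ y` it is the rank-one matrix
`(x - y)(x - y)ᵀ / ‖x - y‖²` (Euclidean norm), and it is `0` when `x = y`. -/
noncomputable def kendallKernel {p : ℕ} (x y : EuclideanSpace ℝ (Fin p)) :
    Matrix (Fin p) (Fin p) ℝ :=
  if x = y then 0 else Matrix.of fun i j => (x i - y i) * (x j - y j) / ‖x - y‖ ^ 2

/-- The population multivariate Kendall's tau matrix of a random vector `X`, namely
`E[(X - X̃)(X - X̃)ᵀ / ‖X - X̃‖²]` where `X̃` is an independent copy of `X` (realized on the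
product space `Ω × Ω` with the product measure `μ × μ`). -/
noncomputable def kendallTau {Ω : Type*} [MeasurableSpace Ω] (μ : Measure Ω) {p : ℕ}
    (X : Ω → EuclideanSpace ℝ (Fin p)) : Matrix (Fin p) (Fin p) ℝ :=
  Matrix.of fun i j => ∫ q : Ω × Ω, kendallKernel (X q.1) (X q.2) i j ∂(μ.prod μ)

/-- The covariance matrix of a random vector `V`, entrywise
`Cov(V) i j = E[(V_i - E V_i)(V_j - E V_j)]`. -/
noncomputable def covMatrix {Ω : Type*} [MeasurableSpace Ω] (μ : Measure Ω) {p : ℕ}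
    (V : Ω → EuclideanSpace ℝ (Fin p)) : Matrix (Fin p) (Fin p) ℝ :=
  Matrix.of fun i j =>
    ∫ ω, (V ω i - ∫ ω', V ω' i ∂μ) * (V ω j - ∫ ω', V ω' j ∂μ) ∂μ

/-!
An orthogonal affine map `x ↦ A x + b` preserves `‖x - y‖`, so the Kendall kernel is equivariant,
`K(Ax + b, Ay + b) = A K(x, y) Aᵀ`, and integrating gives `M_{AX+b} = A M_X Aᵀ`; likewise
`Cov(AX + b) = A Cov(X) Aᵀ` for any `A`. Both `M_W` and `Cov(W)` depend only on the law of `W`,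
so invariance of that law under the diagonal sign flip `D_k` negating the `k`-th coordinate gives
`M_W = D_k M_W D_k`, which kills the off-diagonal entries of row `k`. Hence `M_W` and `Cov(W)` are
diagonal and `M_V = Ω M_W Ωᵀ`, `Cov(V) = Ω Cov(W) Ωᵀ`.
-/

section

variable {p : ℕ}

def mulVecAdd (A : Matrix (Fin p) (Fin p) ℝ) (b : Fin p → ℝ) (x : EuclideanSpace ℝ (Fin p)) :
    EuclideanSpace ℝ (Fin p) :=
  WithLp.toLp 2 (A *ᵥ x.ofLp + b)

lemma continuous_mulVecAdd (A : Matrix (Fin p) (Fin p) ℝ) (b : Fin p → ℝ) :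
    Continuous (mulVecAdd A b) :=
  (PiLp.continuous_toLp 2 _).comp
    ((continuous_const.matrix_mulVec (PiLp.continuous_ofLp 2 _)).add continuous_const)

lemma mulVecAdd_sub_mulVecAdd (A : Matrix (Fin p) (Fin p) ℝ) (b : Fin p → ℝ)
    (x y : EuclideanSpace ℝ (Fin p)) :
    mulVecAdd A b x - mulVecAdd A b y = WithLp.toLp 2 (A *ᵥ (x - y).ofLp) := by
  simp [mulVecAdd, mulVec_sub]

section Orthogonal

variable {A : Matrix (Fin p) (Fin p) ℝ}

lemma norm_toLp_mulVec (hA : Aᵀ * A = 1) (v : Fin p → ℝ) :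
    ‖(WithLp.toLp 2 (A *ᵥ v) : EuclideanSpace ℝ (Fin p))‖ =
      ‖(WithLp.toLp 2 v : EuclideanSpace ℝ (Fin p))‖ := by
  have hdot : A *ᵥ v ⬝ᵥ A *ᵥ v = v ⬝ᵥ v := by
    rw [dotProduct_mulVec, ← vecMul_transpose, vecMul_vecMul, hA, vecMul_one]
  rw [← sq_eq_sq₀ (norm_nonneg _) (norm_nonneg _), ← real_inner_self_eq_norm_sq,
    ← real_inner_self_eq_norm_sq, EuclideanSpace.inner_eq_star_dotProduct,
    EuclideanSpace.inner_eq_star_dotProduct]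
  simpa using hdot

lemma norm_mulVecAdd_sub_mulVecAdd (hA : Aᵀ * A = 1) (b : Fin p → ℝ)
    (x y : EuclideanSpace ℝ (Fin p)) :
    ‖mulVecAdd A b x - mulVecAdd A b y‖ = ‖x - y‖ := by
  rw [mulVecAdd_sub_mulVecAdd, norm_toLp_mulVec hA, WithLp.toLp_ofLp]

lemma mulVecAdd_injective (hA : Aᵀ * A = 1) (b : Fin p → ℝ) :
    Function.Injective (mulVecAdd A b) := fun x y h => by
  rw [← sub_eq_zero, ← norm_eq_zero, ← norm_mulVecAdd_sub_mulVecAdd hA b, h, sub_self,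
    norm_zero]

end Orthogonal

lemma kendallKernel_of_ne {x y : EuclideanSpace ℝ (Fin p)} (h : x ≠ y) :
    kendallKernel x y = (‖x - y‖ ^ 2)⁻¹ • vecMulVec (x - y).ofLp (x - y).ofLp := by
  ext i j
  simp [kendallKernel, h, vecMulVec_apply, div_eq_inv_mul]

theorem kendallKernel_mulVecAdd {A : Matrix (Fin p) (Fin p) ℝ} (hA : Aᵀ * A = 1)
    (b : Fin p → ℝ) (x y : EuclideanSpace ℝ (Fin p)) :
    kendallKernel (mulVecAdd A b x) (mulVecAdd A b y) = A * kendallKernel x y * Aᵀ := by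
  by_cases h : x = y
  · simp [kendallKernel, h]
  rw [kendallKernel_of_ne h, kendallKernel_of_ne ((mulVecAdd_injective hA b).ne h),
    norm_mulVecAdd_sub_mulVecAdd hA, mulVecAdd_sub_mulVecAdd, Matrix.mul_smul, Matrix.smul_mul,
    mul_vecMulVec, vecMulVec_mul, vecMul_transpose]

lemma abs_kendallKernel_apply_le (x y : EuclideanSpace ℝ (Fin p)) (i j : Fin p) :
    |kendallKernel x y i j| ≤ 1 := by
  by_cases h : x = y
  · simp [kendallKernel, h]
  have hpos : 0 < ‖x - y‖ := norm_pos_iff.mpr (sub_ne_zero.mpr h)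
  have hi := PiLp.norm_apply_le (x - y) i
  have hj := PiLp.norm_apply_le (x - y) j
  simp only [kendallKernel, if_neg h, of_apply, abs_div, abs_mul, abs_pow, abs_norm]
  rw [div_le_one (by positivity), sq]
  simp only [Real.norm_eq_abs, PiLp.sub_apply] at hi hj
  exact mul_le_mul hi hj (abs_nonneg _) hpos.le

lemma measurable_kendallKernel_apply (i j : Fin p) :
    Measurable fun z : EuclideanSpace ℝ (Fin p) × EuclideanSpace ℝ (Fin p) =>
      kendallKernel z.1 z.2 i j := by
  simp only [kendallKernel, apply_ite (fun M : Matrix (Fin p) (Fin p) ℝ => M i j),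
    Matrix.zero_apply, of_apply]
  refine Measurable.ite measurableSet_diagonal measurable_const ?_
  fun_prop

lemma integral_mul_mul_apply {α l m n o : Type*} [MeasurableSpace α] {ν : Measure α}
    [Fintype m] [Fintype n] (A : Matrix l m ℝ) (B : Matrix n o ℝ) {F : α → Matrix m n ℝ}
    (hF : ∀ k k', Integrable (fun a => F a k k') ν) (i : l) (j : o) :
    ∫ a, (A * F a * B) i j ∂ν = (A * Matrix.of (fun k k' => ∫ a, F a k k' ∂ν) * B) i j := by
  simp only [mul_apply, of_apply, Finset.sum_mul]
  rw [integral_finsetSum _ fun k' _ =>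
    integrable_finsetSum _ fun k _ => ((hF k k').const_mul (A i k)).mul_const (B k' j)]
  refine Finset.sum_congr rfl fun k' _ => ?_
  rw [integral_finsetSum _ fun k _ => ((hF k k').const_mul (A i k)).mul_const (B k' j)]
  exact Finset.sum_congr rfl fun k _ => by rw [integral_mul_const, integral_const_mul]

section Kendall

variable {Ω : Type*} [MeasurableSpace Ω] {μ : Measure Ω}

lemma integrable_kendallKernel_apply [IsFiniteMeasure μ] {X : Ω → EuclideanSpace ℝ (Fin p)}
    (hX : Measurable X) (i j : Fin p) :
    Integrable (fun q : Ω × Ω => kendallKernel (X q.1) (X q.2) i j) (μ.prod μ) :=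
  Integrable.of_bound
    ((measurable_kendallKernel_apply i j).comp (hX.prodMap hX)).aestronglyMeasurable 1
    (ae_of_all _ fun _ => abs_kendallKernel_apply_le _ _ i j)

theorem kendallTau_map [SFinite μ] {X : Ω → EuclideanSpace ℝ (Fin p)} (hX : Measurable X) :
    kendallTau (μ.map X) id = kendallTau μ X := by
  ext i j
  rw [kendallTau, kendallTau, of_apply, of_apply, Measure.map_prod_map _ _ hX hX]
  exact integral_map (hX.prodMap hX).aemeasurable
    (measurable_kendallKernel_apply i j).aestronglyMeasurable

theorem kendallTau_congr [SFinite μ] {X Y : Ω → EuclideanSpace ℝ (Fin p)}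
    (hX : Measurable X) (hY : Measurable Y) (h : μ.map X = μ.map Y) :
    kendallTau μ X = kendallTau μ Y := by
  rw [← kendallTau_map hX, h, kendallTau_map hY]

theorem kendallTau_mulVecAdd [IsFiniteMeasure μ] {A : Matrix (Fin p) (Fin p) ℝ}
    (hA : Aᵀ * A = 1) (b : Fin p → ℝ) {X : Ω → EuclideanSpace ℝ (Fin p)} (hX : Measurable X) :
    kendallTau μ (fun ω => mulVecAdd A b (X ω)) = A * kendallTau μ X * Aᵀ := by
  ext i j
  simp only [kendallTau, of_apply, kendallKernel_mulVecAdd hA]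
  exact integral_mul_mul_apply A Aᵀ (integrable_kendallKernel_apply hX) i j

end Kendall

section Covariance

variable {Ω Ω' : Type*} [MeasurableSpace Ω] [MeasurableSpace Ω'] {μ : Measure Ω}

theorem covMatrix_congr {μ' : Measure Ω'} {X : Ω → EuclideanSpace ℝ (Fin p)}
    {Y : Ω' → EuclideanSpace ℝ (Fin p)} (h : ProbabilityTheory.IdentDistrib X Y μ μ') :
    covMatrix μ X = covMatrix μ' Y := by
  have hmean : ∀ i, ∫ ω, X ω i ∂μ = ∫ ω, Y ω i ∂μ' := fun i =>
    (h.comp (by fun_prop : Measurable fun x : EuclideanSpace ℝ (Fin p) => x i)).integral_eq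
  ext i j
  simp only [covMatrix, of_apply, hmean]
  exact (h.comp (by fun_prop : Measurable fun x : EuclideanSpace ℝ (Fin p) =>
    (x i - ∫ ω, Y ω i ∂μ') * (x j - ∫ ω, Y ω j ∂μ'))).integral_eq

theorem covMatrix_mulVecAdd [IsProbabilityMeasure μ] (A : Matrix (Fin p) (Fin p) ℝ)
    (b : Fin p → ℝ) {X : Ω → EuclideanSpace ℝ (Fin p)} (hX : MemLp X 2 μ) :
    covMatrix μ (fun ω => mulVecAdd A b (X ω)) = A * covMatrix μ X * Aᵀ := by
  set m : Fin p → ℝ := fun k => ∫ ω, X ω k ∂μ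
  set c : Ω → Fin p → ℝ := fun ω k => X ω k - m k
  have hXk : ∀ k, MemLp (fun ω => X ω k) 2 μ := hX.eval_piLp
  have hc : ∀ k, MemLp (fun ω => c ω k) 2 μ := fun k => (hXk k).sub (memLp_const (m k))
  have hmean : ∀ i, ∫ ω, mulVecAdd A b (X ω) i ∂μ = (A *ᵥ m) i + b i := by
    intro i
    simp only [mulVecAdd, PiLp.toLp_apply, Pi.add_apply, mulVec, dotProduct]
    rw [integral_add (integrable_finsetSum _ fun k _ =>
      ((hXk k).integrable one_le_two).const_mul _) (integrable_const _),
      integral_finsetSum _ fun k _ => ((hXk k).integrable one_le_two).const_mul _]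
    simp [m, integral_const_mul]
  have hcentered : ∀ ω i, mulVecAdd A b (X ω) i - ((A *ᵥ m) i + b i) = (A *ᵥ c ω) i := by
    intro ω i
    rw [show c ω = (X ω).ofLp - m from rfl, mulVec_sub]
    simp [mulVecAdd]
  ext i j
  simp only [covMatrix, of_apply, hmean, hcentered]
  calc ∫ ω, (A *ᵥ c ω) i * (A *ᵥ c ω) j ∂μ
        = ∫ ω, (A * vecMulVec (c ω) (c ω) * Aᵀ) i j ∂μ := by
        simp only [mul_vecMulVec, vecMulVec_mul, vecMul_transpose, vecMulVec_apply]
    _ = (A * covMatrix μ X * Aᵀ) i j :=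
        integral_mul_mul_apply A Aᵀ (fun k l => (hc k).integrable_mul (hc l)) i j

end Covariance

lemma mul_diagonal_mul_transpose_mulVec_col {n R : Type*} [Fintype n] [DecidableEq n]
    [CommRing R] {A : Matrix n n R} (hA : Aᵀ * A = 1) (d : n → R) (j : n) :
    (A * diagonal d * Aᵀ) *ᵥ (fun i => A i j) = d j • fun i => A i j := by
  have hcol : (fun i => A i j) = A *ᵥ Pi.single j 1 := by
    funext i; simp [mulVec_single]
  rw [hcol, mulVec_mulVec, Matrix.mul_assoc _ Aᵀ, hA, Matrix.mul_one, ← mulVec_mulVec,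
    diagonal_mulVec_single, ← mulVec_smul, ← Pi.single_smul', smul_eq_mul]

def signFlip (k : Fin p) : Matrix (Fin p) (Fin p) ℝ :=
  diagonal (Function.update 1 k (-1))

lemma signFlip_transpose_mul_self (k : Fin p) : (signFlip k)ᵀ * signFlip k = 1 := by
  rw [signFlip, diagonal_transpose, diagonal_mul_diagonal, ← diagonal_one]
  congr 1
  funext i
  by_cases h : i = k <;> simp [h]

lemma isDiag_of_signFlip_conj {M : Matrix (Fin p) (Fin p) ℝ}
    (h : ∀ k, signFlip k * M * (signFlip k)ᵀ = M) : M.IsDiag := by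
  intro i j hij
  have hi := congrFun (congrFun (h i) i) j
  simp only [signFlip, diagonal_transpose, mul_diagonal, diagonal_mul, Function.update_self,
    Function.update_of_ne hij.symm, Pi.one_apply, neg_mul, one_mul, mul_one] at hi
  linarith

lemma map_mulVecAdd_signFlip {Ω : Type*} [MeasurableSpace Ω] {μ : Measure Ω}
    {W : Ω → EuclideanSpace ℝ (Fin p)}
    (hsym : ∀ s : Fin p → ℝ, (∀ i, s i = 1 ∨ s i = -1) →
      Measure.map (fun ω => (WithLp.toLp 2 (fun i => s i * W ω i) : EuclideanSpace ℝ (Fin p))) μ =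
        Measure.map W μ) (k : Fin p) :
    μ.map (fun ω => mulVecAdd (signFlip k) 0 (W ω)) = μ.map W := by
  convert hsym (Function.update 1 k (-1)) fun i => ?_ using 3
  · simp only [mulVecAdd, signFlip, add_zero]
    exact congrArg _ (funext (mulVec_diagonal _ _))
  · by_cases h : i = k <;> simp [h]

end

theorem kendallTau_elliptical_diagonalization_general {p : ℕ}
    {Ω : Type*} [MeasurableSpace Ω] (μ : Measure Ω) [IsProbabilityMeasure μ]
    (W : Ω → EuclideanSpace ℝ (Fin p)) (hW : Measurable W)
    (hsym : ∀ s : Fin p → ℝ, (∀ i, s i = 1 ∨ s i = -1) →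
      Measure.map (fun ω => (WithLp.toLp 2 (fun i => s i * W ω i) : EuclideanSpace ℝ (Fin p))) μ =
        Measure.map W μ)
    (Omg : Matrix (Fin p) (Fin p) ℝ) (hOmg : Omg * Omgᵀ = 1) (b : Fin p → ℝ)
    (V : Ω → EuclideanSpace ℝ (Fin p))
    (hV : ∀ ω i, V ω i = Omg.mulVec (fun k => W ω k) i + b i) :
    ∃ Lam1 : Fin p → ℝ,
      kendallTau μ V = Omg * Matrix.diagonal Lam1 * Omgᵀ ∧
      (∀ j, (kendallTau μ V).mulVec (fun i => Omg i j) = Lam1 j • fun i => Omg i j) ∧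
      (Integrable (fun ω => ‖W ω‖ ^ 2) μ →
        covMatrix μ V =
          Omg * Matrix.diagonal (fun i => ∫ ω, (W ω i - ∫ ω', W ω' i ∂μ) ^ 2 ∂μ) * Omgᵀ) := by
  have hOrth : Omgᵀ * Omg = 1 := mul_eq_one_comm.mp hOmg
  have hVW : V = fun ω => mulVecAdd Omg b (W ω) := funext fun ω => PiLp.ext (hV ω)
  have hflip_meas : ∀ k, Measurable fun ω => mulVecAdd (signFlip k) 0 (W ω) := fun k =>
    (continuous_mulVecAdd _ _).measurable.comp hW
  have hK : (kendallTau μ W).IsDiag := isDiag_of_signFlip_conj fun k => by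
    rw [← kendallTau_mulVecAdd (signFlip_transpose_mul_self k) 0 hW,
      kendallTau_congr (hflip_meas k) hW (map_mulVecAdd_signFlip hsym k)]
  have hKV : kendallTau μ V = Omg * diagonal (kendallTau μ W).diag * Omgᵀ := by
    rw [hVW, kendallTau_mulVecAdd hOrth b hW, hK.diagonal_diag]
  refine ⟨(kendallTau μ W).diag, hKV, fun j => ?_, fun hint => ?_⟩
  · rw [hKV]
    exact mul_diagonal_mul_transpose_mulVec_col hOrth _ j
  have hW2 : MemLp W 2 μ :=
    (memLp_two_iff_integrable_sq_norm hW.aestronglyMeasurable).mpr hint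
  have hC : (covMatrix μ W).IsDiag := isDiag_of_signFlip_conj fun k => by
    rw [← covMatrix_mulVecAdd _ 0 hW2,
      covMatrix_congr ⟨(hflip_meas k).aemeasurable, hW.aemeasurable, map_mulVecAdd_signFlip hsym k⟩]
  rw [hVW, covMatrix_mulVecAdd Omg b hW2, ← hC.diagonal_diag]
  simp only [covMatrix, sq]
  rfl

/-- Let `W` be a random vector in `ℝ^p` whose distribution is invariant
under every diagonal matrix `g` with diagonal entries in `{1, -1}`, and suppose
`P(W = W̃) = 0` where `W̃` is an independent copy of `W`.  Let `Ω₀` be an orthogonal `p × p`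
matrix, `b ∈ ℝ^p`, and set `V = Ω₀ W + b`.  Then the multivariate Kendall's tau matrix of
`V` satisfies `M_V = Ω₀ Λ₁ Ω₀ᵀ` for some diagonal matrix `Λ₁`; in particular, every column
of `Ω₀` is an eigenvector of `M_V`.  If moreover `E‖W‖² < ∞`, then
`Cov(V) = Ω₀ Λ Ω₀ᵀ` with `Λ = diag(Var W_1, …, Var W_p)`, so `M_V` and `Cov(V)` are
diagonalized by the same orthogonal matrix `Ω₀`. -/
theorem kendallTau_elliptical_diagonalization {p : ℕ}
    {Ω : Type*} [MeasurableSpace Ω] (μ : Measure Ω) [IsProbabilityMeasure μ]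
    (W : Ω → EuclideanSpace ℝ (Fin p)) (hW : Measurable W)
    (hsym : ∀ s : Fin p → ℝ, (∀ i, s i = 1 ∨ s i = -1) →
      Measure.map (fun ω => (WithLp.toLp 2 (fun i => s i * W ω i) : EuclideanSpace ℝ (Fin p))) μ =
        Measure.map W μ)
    (hne : (μ.prod μ) {q : Ω × Ω | W q.1 = W q.2} = 0)
    (Omg : Matrix (Fin p) (Fin p) ℝ) (hOmg : Omg * Omgᵀ = 1) (b : Fin p → ℝ)
    (V : Ω → EuclideanSpace ℝ (Fin p))
    (hV : ∀ ω i, V ω i = Omg.mulVec (fun k => W ω k) i + b i) :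
    ∃ Lam1 : Fin p → ℝ,
      kendallTau μ V = Omg * Matrix.diagonal Lam1 * Omgᵀ ∧
      (∀ j, (kendallTau μ V).mulVec (fun i => Omg i j) = Lam1 j • fun i => Omg i j) ∧
      (Integrable (fun ω => ‖W ω‖ ^ 2) μ →
        covMatrix μ V =
          Omg * Matrix.diagonal (fun i => ∫ ω, (W ω i - ∫ ω', W ω' i ∂μ) ^ 2 ∂μ) * Omgᵀ) :=
  kendallTau_elliptical_diagonalization_general μ W hW hsym Omg hOmg b V hV
end

section
/- For any two nonzero vectors u and v in R^p, the normalized rank-one projection matrices satisfy || u u^T / ||u||_2^2 - v v^T / ||v||_2^2 ||_2 <= 2 * (||u||_2 + ||v||_2) * ||u - v||_2 / ||v||_2^2, where the left-hand norm is the spectral norm. -/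
open Matrix
open scoped Matrix.Norms.L2Operator

/-!
Write `a = ‖u‖`, `b = ‖v‖`. The difference splits as
`a⁻² uuᵀ - b⁻² vvᵀ = b⁻² (u (u - v)ᵀ + (u - v) vᵀ) + (a⁻² - b⁻²) uuᵀ`.
A rank-one operator `x yᵀ` has norm `‖x‖ ‖y‖`, so the first part is at most
`(a + b) ‖u - v‖ / b²`; the second has norm `|a⁻² - b⁻²| a² ≤ |b² - a²| / b²`, which is at most
the same bound because `|b - a| ≤ ‖u - v‖`.
-/

open InnerProductSpace

lemma abs_inv_sq_sub_inv_sq_mul_sq_le {a b : ℝ} (ha : 0 ≤ a) (hb : 0 < b) :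
    |(a ^ 2)⁻¹ - (b ^ 2)⁻¹| * a ^ 2 ≤ |b - a| * (a + b) / b ^ 2 := by
  rcases ha.eq_or_lt with rfl | ha
  · rw [zero_pow two_ne_zero, mul_zero]
    positivity
  refine le_of_eq ?_
  calc |(a ^ 2)⁻¹ - (b ^ 2)⁻¹| * a ^ 2 = |((a ^ 2)⁻¹ - (b ^ 2)⁻¹) * a ^ 2| := by
        rw [abs_mul, abs_sq]
    _ = |(b - a) * (a + b) / b ^ 2| := by congr 1; field_simp; ring
    _ = |b - a| * (a + b) / b ^ 2 := by
        rw [abs_div, abs_mul, abs_of_pos (by positivity : 0 < a + b), abs_sq]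

section RankOne

variable {𝕜 E : Type*} [RCLike 𝕜] [NormedAddCommGroup E] [InnerProductSpace 𝕜 E]

theorem norm_inv_sq_smul_rankOne_sub_le (u v : E) (hv : v ≠ 0) :
    ‖((‖u‖ ^ 2)⁻¹ : 𝕜) • rankOne 𝕜 u u - ((‖v‖ ^ 2)⁻¹ : 𝕜) • rankOne 𝕜 v v‖ ≤
      2 * (‖u‖ + ‖v‖) * ‖u - v‖ / ‖v‖ ^ 2 := by
  have hb : 0 < ‖v‖ := norm_pos_iff.mpr hv
  have hd : |‖v‖ - ‖u‖| ≤ ‖u - v‖ := by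
    simpa only [norm_sub_rev v u] using abs_norm_sub_norm_le v u
  have split : ((‖u‖ ^ 2)⁻¹ : 𝕜) • rankOne 𝕜 u u - ((‖v‖ ^ 2)⁻¹ : 𝕜) • rankOne 𝕜 v v =
      (((‖v‖ ^ 2)⁻¹ : ℝ) : 𝕜) • (rankOne 𝕜 u (u - v) + rankOne 𝕜 (u - v) v) +
        (((‖u‖ ^ 2)⁻¹ - (‖v‖ ^ 2)⁻¹ : ℝ) : 𝕜) • rankOne 𝕜 u u := by
    simp only [map_sub, _root_.sub_apply]
    push_cast
    module
  have h_main : ‖(((‖v‖ ^ 2)⁻¹ : ℝ) : 𝕜) • (rankOne 𝕜 u (u - v) + rankOne 𝕜 (u - v) v)‖ ≤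
      (‖u‖ + ‖v‖) * ‖u - v‖ / ‖v‖ ^ 2 := by
    rw [norm_smul, RCLike.norm_ofReal, abs_of_pos (by positivity), inv_mul_eq_div]
    gcongr
    refine (norm_add_le _ _).trans_eq ?_
    rw [norm_rankOne, norm_rankOne]
    ring
  have h_scale : ‖(((‖u‖ ^ 2)⁻¹ - (‖v‖ ^ 2)⁻¹ : ℝ) : 𝕜) • rankOne 𝕜 u u‖ ≤
      (‖u‖ + ‖v‖) * ‖u - v‖ / ‖v‖ ^ 2 := by
    rw [norm_smul, RCLike.norm_ofReal, norm_rankOne, ← sq]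
    refine (abs_inv_sq_sub_inv_sq_mul_sq_le (norm_nonneg u) hb).trans ?_
    rw [mul_comm]
    gcongr
  rw [split]
  refine (norm_add_le _ _).trans ((add_le_add h_main h_scale).trans_eq ?_)
  ring

end RankOne

theorem toEuclideanCLM_of_mul_eq_rankOne {n : Type*} [Fintype n] [DecidableEq n]
    (x y : EuclideanSpace ℝ n) :
    toEuclideanCLM (𝕜 := ℝ) (Matrix.of fun i j => x i * y j) = rankOne ℝ x y := by
  refine ContinuousLinearMap.coe_injective ?_
  rw [coe_toEuclideanCLM_eq_toEuclideanLin, ← LinearEquiv.eq_symm_apply,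
    symm_toEuclideanLin_rankOne, star_trivial]
  rfl

theorem normalized_rankOne_diff_le_general {p : ℕ} (u v : EuclideanSpace ℝ (Fin p))
    (hv : v ≠ 0) :
    ‖((‖u‖ ^ 2)⁻¹ • Matrix.of (fun i j => u i * u j) -
        (‖v‖ ^ 2)⁻¹ • Matrix.of (fun i j => v i * v j) : Matrix (Fin p) (Fin p) ℝ)‖ ≤
      2 * (‖u‖ + ‖v‖) * ‖u - v‖ / ‖v‖ ^ 2 := by
  rw [cstar_norm_def, map_sub, map_smul, map_smul, toEuclideanCLM_of_mul_eq_rankOne,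
    toEuclideanCLM_of_mul_eq_rankOne]
  exact norm_inv_sq_smul_rankOne_sub_le u v hv

/-- For any two nonzero vectors `u` and `v` in `ℝ^p`, the normalized
rank-one projection matrices satisfy
`‖u uᵀ / ‖u‖² - v vᵀ / ‖v‖²‖₂ ≤ 2 (‖u‖ + ‖v‖) ‖u - v‖ / ‖v‖²`,
where the left-hand norm is the spectral (ℓ²-to-ℓ²) norm. -/
theorem normalized_rankOne_diff_le {p : ℕ} (u v : EuclideanSpace ℝ (Fin p))
    (hu : u ≠ 0) (hv : v ≠ 0) :
    ‖((‖u‖ ^ 2)⁻¹ • Matrix.of (fun i j => u i * u j) -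
        (‖v‖ ^ 2)⁻¹ • Matrix.of (fun i j => v i * v j) : Matrix (Fin p) (Fin p) ℝ)‖ ≤
      2 * (‖u‖ + ‖v‖) * ‖u - v‖ / ‖v‖ ^ 2 :=
  normalized_rankOne_diff_le_general u v hv
end
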